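/- Let A = K[x], W 2-dimensional with basis e₁, e₂, m ∈ K. Define an action of V = K[x]d/dx on M = A·e₁ ⊕ A·e₂ by (f d/dx)(g e₁) = (f g′ + (m+2) g f′) e₁ and (f d/dx)(g e₂) = (f g′ + m g f′) e₂ + (1/6) g f‴ e₁. Then this defines a Lie algebra action of V on M satisfying the Leibniz rule with the A-action, making M an AV-module. -/
import Mathlib


open Polynomial

/-- The action of `f d/dx` on `M = K[x]e₁ ⊕ K[x]e₂` (realized as `K[x] × K[x]`):
`(f d/dx)(g e₁) = (f g′ + (m+2) g f′) e₁`,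
`(f d/dx)(g e₂) = (f g′ + m g f′) e₂ + (1/6) g f‴ e₁`. -/
noncomputable def sigmaAct (K : Type*) [Field K] (m : K) (f : Polynomial K)
    (v : Polynomial K × Polynomial K) : Polynomial K × Polynomial K :=
  (f * derivative v.1 + (C m + 2) * v.1 * derivative f
      + C ((6 : K)⁻¹) * v.2 * derivative (derivative (derivative f)),
   f * derivative v.2 + C m * v.2 * derivative f)

lemma six_inv_cancel (K : Type*) [Field K] [CharZero K] :
    C ((6 : K)⁻¹) * (C (6 : K)) = 1 := by
  rw [← C_mul, inv_mul_cancel₀ (by norm_num), C_1]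

/-- The formulas above define a Lie algebra action of `V = K[x]d/dx` (with
bracket `[f d/dx, g d/dx] = (fg′ − gf′) d/dx`) on `M`, satisfying the Leibniz
rule with the `K[x]`-module structure, so `M` is an AV-module. -/
theorem sigmaAct_is_av_module (K : Type*) [Field K] [CharZero K] (m : K) :
    (∀ (f : Polynomial K) (v w : Polynomial K × Polynomial K),
      sigmaAct K m f (v + w) = sigmaAct K m f v + sigmaAct K m f w) ∧
    (∀ (f g : Polynomial K) (v : Polynomial K × Polynomial K),
      sigmaAct K m f (sigmaAct K m g v) - sigmaAct K m g (sigmaAct K m f v)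
        = sigmaAct K m (f * derivative g - g * derivative f) v) ∧
    (∀ (f a : Polynomial K) (v : Polynomial K × Polynomial K),
      sigmaAct K m f (a • v) = (f * derivative a) • v + a • sigmaAct K m f v) := by
  refine ⟨?_, ?_, ?_⟩
  · intro f v w
    simp only [sigmaAct, Prod.fst_add, Prod.snd_add, Prod.mk_add_mk, derivative_add]
    refine Prod.ext ?_ ?_ <;> simp <;> ring
  · intro f g v
    have h6 := six_inv_cancel K
    simp only [sigmaAct, Prod.mk_sub_mk, Prod.mk.injEq, derivative_add, derivative_mul,
      derivative_sub, derivative_C, map_add, map_ofNat, derivative_ofNat]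
    constructor <;> ring
  · intro f a v
    simp only [sigmaAct, Prod.smul_mk, Prod.smul_fst, Prod.smul_snd, smul_eq_mul,
      Prod.mk_add_mk, derivative_mul, Prod.mk.injEq]
    refine Prod.ext ?_ ?_ <;> simp [Prod.fst_add, Prod.snd_add, smul_eq_mul] <;> ring
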